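/- arXiv:2206.04753 — 3 statements merged into one kernel-verified Lean document; each statement's English description precedes it below -/
import Mathlib

section
/- If f₁ is a Bernstein function and f₂ is a non-negative differentiable function whose derivative f₂' is completely monotone on an open interval J containing f₁((0,∞)), then f₂ ∘ f₁ is a Bernstein function. -/
open Set MeasureTheory Filter Topology
open scoped ContDiff

/-- A Bernstein function: non-negative, C^∞ on (0,∞), with
`(-1)^(n+1) f^(n) ≥ 0` on (0,∞) for all n ≥ 1. -/
def BernsteinOn (f : ℝ → ℝ) : Prop :=
  ContDiffOn ℝ (⊤ : ℕ∞) f (Set.Ioi 0) ∧ (∀ x ∈ Set.Ioi (0:ℝ), 0 ≤ f x) ∧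
  ∀ n : ℕ, 1 ≤ n → ∀ x ∈ Set.Ioi (0:ℝ),
    0 ≤ (-1 : ℝ) ^ (n + 1) * iteratedDerivWithin n f (Set.Ioi 0) x

/-- Completely monotone on a set: C^∞ with `(-1)^k φ^(k) ≥ 0` for all k ≥ 0. -/
def CompletelyMonotoneOn (φ : ℝ → ℝ) (I : Set ℝ) : Prop :=
  ContDiffOn ℝ (⊤ : ℕ∞) φ I ∧ ∀ k : ℕ, ∀ x ∈ I, 0 ≤ (-1 : ℝ) ^ k * iteratedDerivWithin k φ I x

/-- Absolutely monotone on a set: C^∞ with `ψ^(k) ≥ 0` for all k ≥ 0. -/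
def AbsolutelyMonotoneOn' (ψ : ℝ → ℝ) (I : Set ℝ) : Prop :=
  ContDiffOn ℝ (⊤ : ℕ∞) ψ I ∧ ∀ k : ℕ, ∀ x ∈ I, 0 ≤ iteratedDerivWithin k ψ I x


private lemma sign_prod {s : Set ℝ} (hso : IsOpen s) :
    ∀ (k : ℕ) (u v : ℝ → ℝ), ContDiffOn ℝ (⊤ : ℕ∞) u s → ContDiffOn ℝ (⊤ : ℕ∞) v s →
    (∀ j ≤ k, ∀ x ∈ s, 0 ≤ (-1:ℝ)^j * iteratedDerivWithin j u s x) →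
    (∀ j ≤ k, ∀ x ∈ s, 0 ≤ (-1:ℝ)^j * iteratedDerivWithin j v s x) →
    ∀ x ∈ s, 0 ≤ (-1:ℝ)^k * iteratedDerivWithin k (fun y => u y * v y) s x := by
  have hU : UniqueDiffOn ℝ s := hso.uniqueDiffOn
  intro k
  induction k with
  | zero =>
    intro u v hu hv hsu hsv x hx
    have h1 := hsu 0 le_rfl x hx
    have h2 := hsv 0 le_rfl x hx
    simp only [pow_zero, one_mul, iteratedDerivWithin_zero] at h1 h2 ⊢
    exact mul_nonneg h1 h2
  | succ k IH =>
    intro u v hu hv hsu hsv x hx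
    have hdu : DifferentiableOn ℝ u s := hu.differentiableOn (by simp)
    have hdv : DifferentiableOn ℝ v s := hv.differentiableOn (by simp)
    have hu' : ContDiffOn ℝ (⊤ : ℕ∞) (fun y => -(derivWithin u s y)) s :=
      (hu.derivWithin hU (by simp)).neg
    have hv' : ContDiffOn ℝ (⊤ : ℕ∞) (fun y => -(derivWithin v s y)) s :=
      (hv.derivWithin hU (by simp)).neg
    -- signs of the negated derivatives
    have hsu' : ∀ j ≤ k, ∀ x ∈ s,
        0 ≤ (-1:ℝ)^j * iteratedDerivWithin j (fun y => -(derivWithin u s y)) s x := by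
      intro j hj y hy
      rw [iteratedDerivWithin_fun_neg, ← iteratedDerivWithin_succ']
      have := hsu (j+1) (Nat.succ_le_succ hj) y hy
      rw [pow_succ] at this
      nlinarith [this]
    have hsv' : ∀ j ≤ k, ∀ x ∈ s,
        0 ≤ (-1:ℝ)^j * iteratedDerivWithin j (fun y => -(derivWithin v s y)) s x := by
      intro j hj y hy
      rw [iteratedDerivWithin_fun_neg, ← iteratedDerivWithin_succ']
      have := hsv (j+1) (Nat.succ_le_succ hj) y hy
      rw [pow_succ] at this
      nlinarith [this]
    have hsuk : ∀ j ≤ k, ∀ x ∈ s, 0 ≤ (-1:ℝ)^j * iteratedDerivWithin j u s x :=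
      fun j hj => hsu j (le_trans hj (Nat.le_succ k))
    have hsvk : ∀ j ≤ k, ∀ x ∈ s, 0 ≤ (-1:ℝ)^j * iteratedDerivWithin j v s x :=
      fun j hj => hsv j (le_trans hj (Nat.le_succ k))
    have heq : Set.EqOn (derivWithin (fun y => u y * v y) s)
        (fun y => -((fun z => -(derivWithin u s z)) y * v y) +
          -(u y * (fun z => -(derivWithin v s z)) y)) s := by
      intro y hy
      rw [derivWithin_fun_mul (hdu y hy) (hdv y hy)]
      ring
    rw [iteratedDerivWithin_succ', iteratedDerivWithin_congr heq hx]
    have hA : ContDiffOn ℝ (k : WithTop ℕ∞)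
        (fun y => -((fun z => -(derivWithin u s z)) y * v y)) s :=
      ((hu'.mul hv).neg).of_le (by exact_mod_cast le_top)
    have hB : ContDiffOn ℝ (k : WithTop ℕ∞)
        (fun y => -(u y * (fun z => -(derivWithin v s z)) y)) s :=
      ((hu.mul hv').neg).of_le (by exact_mod_cast le_top)
    rw [show (fun y => -((fun z => -(derivWithin u s z)) y * v y) +
          -(u y * (fun z => -(derivWithin v s z)) y)) =
        ((fun y => -((fun z => -(derivWithin u s z)) y * v y)) +
         (fun y => -(u y * (fun z => -(derivWithin v s z)) y))) from rfl,
      iteratedDerivWithin_add hx hU (hA x hx) (hB x hx),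
      iteratedDerivWithin_fun_neg, iteratedDerivWithin_fun_neg]
    have h1 := IH (fun y => -(derivWithin u s y)) v hu' hv hsu' hsvk x hx
    have h2 := IH u (fun y => -(derivWithin v s y)) hu hv' hsuk hsv' x hx
    rw [pow_succ]
    nlinarith [h1, h2]


lemma bernstein_deriv_sign {f₁ : ℝ → ℝ} (h1 : BernsteinOn f₁) :
    ∀ j : ℕ, ∀ x ∈ Set.Ioi (0:ℝ),
      0 ≤ (-1:ℝ)^j * iteratedDerivWithin j (derivWithin f₁ (Set.Ioi 0)) (Set.Ioi 0) x := by
  have hUS : UniqueDiffOn ℝ (Set.Ioi (0:ℝ)) := isOpen_Ioi.uniqueDiffOn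
  intro j x hx
  rw [← iteratedDerivWithin_succ']
  have := h1.2.2 (j+1) (Nat.succ_le_succ (Nat.zero_le j)) x hx
  have hpow : ((-1:ℝ))^(j+1+1) = (-1:ℝ)^j := by ring
  rwa [hpow] at this

lemma sign_comp {f₁ : ℝ → ℝ} {J : Set ℝ} (hJopen : IsOpen J)
    (h1 : BernsteinOn f₁) (hmapsTo : Set.MapsTo f₁ (Set.Ioi 0) J) :
    ∀ (k : ℕ) (g : ℝ → ℝ), ContDiffOn ℝ (⊤ : ℕ∞) g J →
    (∀ j : ℕ, ∀ y ∈ J, 0 ≤ (-1:ℝ)^j * iteratedDerivWithin j g J y) →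
    ∀ x ∈ Set.Ioi (0:ℝ), 0 ≤ (-1:ℝ)^k * iteratedDerivWithin k (g ∘ f₁) (Set.Ioi 0) x := by
  have hUS : UniqueDiffOn ℝ (Set.Ioi (0:ℝ)) := isOpen_Ioi.uniqueDiffOn
  have hUJ : UniqueDiffOn ℝ J := hJopen.uniqueDiffOn
  intro k
  induction k using Nat.strong_induction_on with
  | _ k IH =>
    match k with
    | 0 =>
      intro g hg hsg x hx
      have := hsg 0 (f₁ x) (hmapsTo hx)
      simpa using this
    | (k+1) =>
      intro g hg hsg x hx
      have hg' : ContDiffOn ℝ (⊤ : ℕ∞) (fun z => -(derivWithin g J z)) J :=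
        (hg.derivWithin hUJ (by simp)).neg
      have hsg' : ∀ j : ℕ, ∀ y ∈ J,
          0 ≤ (-1:ℝ)^j * iteratedDerivWithin j (fun z => -(derivWithin g J z)) J y := by
        intro j y hy
        rw [iteratedDerivWithin_fun_neg, ← iteratedDerivWithin_succ']
        have := hsg (j+1) y hy
        rw [pow_succ] at this
        nlinarith [this]
      have heq : Set.EqOn (derivWithin (g ∘ f₁) (Set.Ioi 0))
          (fun y => -(((fun z => -(derivWithin g J z)) ∘ f₁) y *
            derivWithin f₁ (Set.Ioi 0) y)) (Set.Ioi 0) := by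
        intro y hy
        rw [derivWithin_comp y (hg.differentiableOn (by simp) _ (hmapsTo hy))
          (h1.1.differentiableOn (by simp) y hy) hmapsTo]
        simp [Function.comp]
      rw [iteratedDerivWithin_succ', iteratedDerivWithin_congr heq hx,
        iteratedDerivWithin_fun_neg]
      have husmooth : ContDiffOn ℝ (⊤ : ℕ∞) ((fun z => -(derivWithin g J z)) ∘ f₁) (Set.Ioi 0) :=
        hg'.comp h1.1 hmapsTo
      have hvsmooth : ContDiffOn ℝ (⊤ : ℕ∞) (derivWithin f₁ (Set.Ioi 0)) (Set.Ioi 0) :=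
        h1.1.derivWithin hUS (by simp)
      have key := sign_prod isOpen_Ioi k ((fun z => -(derivWithin g J z)) ∘ f₁)
        (derivWithin f₁ (Set.Ioi 0)) husmooth hvsmooth
        (fun j hj => IH j (Nat.lt_succ_of_le hj) (fun z => -(derivWithin g J z)) hg' hsg')
        (fun j _ => bernstein_deriv_sign h1 j) x hx
      rw [pow_succ]
      nlinarith [key]

/-- If f₁ is Bernstein and f₂ is non-negative and differentiable with completely
monotone derivative on an open interval J containing f₁((0,∞)), then f₂ ∘ f₁ is
Bernstein. -/
theorem bernstein_comp_completelyMonotone_deriv (f₁ f₂ : ℝ → ℝ) (J : Set ℝ)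
    (hJopen : IsOpen J) (hJconv : Convex ℝ J)
    (h1 : BernsteinOn f₁) (hmaps : f₁ '' Set.Ioi 0 ⊆ J)
    (hnn : ∀ x ∈ J, 0 ≤ f₂ x)
    (hdiff : DifferentiableOn ℝ f₂ J)
    (hcm : CompletelyMonotoneOn (derivWithin f₂ J) J) :
    BernsteinOn (f₂ ∘ f₁) := by
  have hUS : UniqueDiffOn ℝ (Set.Ioi (0:ℝ)) := isOpen_Ioi.uniqueDiffOn
  have hUJ : UniqueDiffOn ℝ J := hJopen.uniqueDiffOn
  have hmapsTo : Set.MapsTo f₁ (Set.Ioi 0) J := fun x hx => hmaps ⟨x, hx, rfl⟩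
  -- f₂ is C^ω on J
  have hfd : ∀ x ∈ J, HasDerivAt f₂ (derivWithin f₂ J x) x := by
    intro x hx
    have h := (hdiff x hx).differentiableAt (hJopen.mem_nhds hx)
    rw [derivWithin_of_isOpen hJopen hx]
    exact h.hasDerivAt
  have hf₂smooth : ContDiffOn ℝ (⊤ : ℕ∞) f₂ J :=
    (contDiffOn_infty_iff_derivWithin hUJ).mpr ⟨hdiff, hcm.1⟩
  have hcomp : ContDiffOn ℝ (⊤ : ℕ∞) (f₂ ∘ f₁) (Set.Ioi 0) := hf₂smooth.comp h1.1 hmapsTo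
  refine ⟨hcomp, fun x hx => hnn (f₁ x) (hmapsTo hx), ?_⟩
  intro n hn x hx
  obtain ⟨m, rfl⟩ : ∃ m, n = m + 1 := ⟨n - 1, (Nat.succ_pred_eq_of_pos hn).symm⟩
  set u : ℝ → ℝ := (derivWithin f₂ J) ∘ f₁ with hu
  set v : ℝ → ℝ := derivWithin f₁ (Set.Ioi 0) with hv
  have heq : Set.EqOn (derivWithin (f₂ ∘ f₁) (Set.Ioi 0))
      (fun y => u y * v y) (Set.Ioi 0) := by
    intro y hy
    rw [derivWithin_comp y (hf₂smooth.differentiableOn (by simp) _ (hmapsTo hy))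
      (h1.1.differentiableOn (by simp) y hy) hmapsTo]
    rfl
  rw [iteratedDerivWithin_succ', iteratedDerivWithin_congr heq hx]
  have husmooth : ContDiffOn ℝ (⊤ : ℕ∞) u (Set.Ioi 0) := hcm.1.comp h1.1 hmapsTo
  have hvsmooth : ContDiffOn ℝ (⊤ : ℕ∞) v (Set.Ioi 0) := h1.1.derivWithin hUS (by simp)
  have husign : ∀ j ≤ m, ∀ y ∈ Set.Ioi (0:ℝ),
      0 ≤ (-1:ℝ)^j * iteratedDerivWithin j u (Set.Ioi 0) y := by
    intro j _ y hy
    exact sign_comp hJopen h1 hmapsTo j (derivWithin f₂ J) hcm.1 hcm.2 y hy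
  have hvsign : ∀ j ≤ m, ∀ y ∈ Set.Ioi (0:ℝ),
      0 ≤ (-1:ℝ)^j * iteratedDerivWithin j v (Set.Ioi 0) y := by
    intro j _ y hy
    exact bernstein_deriv_sign h1 j y hy
  have key := sign_prod isOpen_Ioi m u v husmooth hvsmooth husign hvsign x hx
  have hpow : ((-1:ℝ))^(m+1+1) = (-1:ℝ)^m := by ring
  rw [hpow]
  exact key
end

section
/- For every holomorphic function f from the right half-plane ℍ = {z ∈ ℂ : Re z > 0} to its closure {z : Re z ≥ 0}, the limit f'(∞) := lim_{x → +∞, x ∈ ℝ} f(x)/x exists, is finite and non-negative, and equals inf_{ζ ∈ ℍ} Re f(ζ)/Re ζ. Moreover, for all ζ ∈ ℍ, Re f(ζ) ≥ f'(∞)·Re ζ. -/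
open Set MeasureTheory Filter Topology

open Metric Complex


lemma halfplane_abs_lt {u v : ℂ} (hu : 0 < u.re) (hv : 0 < v.re) :
    ‖u - v‖ < ‖u + (starRingEnd ℂ) v‖ := by
  have h2 : Complex.normSq (u - v) < Complex.normSq (u + (starRingEnd ℂ) v) := by
    simp only [Complex.normSq_apply, Complex.sub_re, Complex.sub_im, Complex.add_re,
      Complex.add_im, Complex.conj_re, Complex.conj_im]
    nlinarith [hu, hv]
  have := Complex.sq_norm (u - v)
  have := Complex.sq_norm (u + (starRingEnd ℂ) v)
  nlinarith [norm_nonneg (u - v), norm_nonneg (u + (starRingEnd ℂ) v)]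

lemma halfplane_add_conj_ne {u v : ℂ} (hu : 0 < u.re) (hv : 0 < v.re) :
    u + (starRingEnd ℂ) v ≠ 0 := by
  intro h
  have : (u + (starRingEnd ℂ) v).re = u.re + v.re := by simp
  rw [h] at this
  simp at this
  linarith

lemma julia_sp (f : ℂ → ℂ) (hf : DifferentiableOn ℂ f {z : ℂ | 0 < z.re})
    (hm : ∀ z : ℂ, 0 < z.re → 0 < (f z).re) {w z : ℂ} (hw : 0 < w.re) (hz : 0 < z.re) :
    ‖f z - f w‖ * ‖z + (starRingEnd ℂ) w‖
      ≤ ‖z - w‖ * ‖f z + (starRingEnd ℂ) (f w)‖ := by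
  set a := f w with ha
  have hare : 0 < a.re := hm w hw
  set T : ℂ → ℂ := fun ζ => (w + (starRingEnd ℂ) w * ζ) / (1 - ζ) with hT
  have hden : ∀ ζ : ℂ, ζ ∈ ball (0:ℂ) 1 → (1:ℂ) - ζ ≠ 0 := by
    intro ζ hζ
    simp only [mem_ball, dist_zero_right] at hζ
    intro h
    have : ζ = 1 := by linear_combination -h
    rw [this] at hζ; simp at hζ
  have hTre : ∀ ζ : ℂ, ζ ∈ ball (0:ℂ) 1 → 0 < (T ζ).re := by
    intro ζ hζ
    have h1 : Complex.normSq (1 - ζ) > 0 := by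
      exact Complex.normSq_pos.2 (hden ζ hζ)
    have h2 : Complex.normSq ζ < 1 := by
      simp only [mem_ball, dist_zero_right] at hζ
      have := Complex.sq_norm ζ
      nlinarith [norm_nonneg ζ]
    have : (T ζ).re = w.re * (1 - Complex.normSq ζ) / Complex.normSq (1 - ζ) := by
      rw [hT]
      simp only [Complex.div_re, Complex.add_re, Complex.add_im, Complex.mul_re, Complex.mul_im,
        Complex.sub_re, Complex.sub_im, Complex.one_re, Complex.one_im,
        Complex.conj_re, Complex.conj_im, Complex.normSq_apply]
      ring
    rw [this]
    exact div_pos (mul_pos hw (by linarith)) h1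
  have hTdiff : DifferentiableOn ℂ T (ball (0:ℂ) 1) := by
    apply DifferentiableOn.div
    · exact (differentiable_const _).differentiableOn.add
        ((differentiable_const _).mul differentiable_id).differentiableOn
    · exact (differentiable_const _).differentiableOn.sub differentiable_id.differentiableOn
    · exact hden
  set g : ℂ → ℂ := fun ζ => (f (T ζ) - a) / (f (T ζ) + (starRingEnd ℂ) a) with hg
  have hT0 : T 0 = w := by simp [hT]
  have hg0 : g 0 = 0 := by simp [hg, hT0, ← ha]
  have hF : DifferentiableOn ℂ (fun ζ => f (T ζ)) (ball (0:ℂ) 1) :=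
    hf.comp hTdiff (fun ζ hζ => hTre ζ hζ)
  have hgdiff : DifferentiableOn ℂ g (ball (0:ℂ) 1) := by
    apply DifferentiableOn.div (hF.sub (differentiableOn_const _))
      (hF.add (differentiableOn_const _))
    intro ζ hζ
    exact halfplane_add_conj_ne (hm _ (hTre ζ hζ)) hare
  have hgmaps : MapsTo g (ball (0:ℂ) 1) (ball (g 0) 1) := by
    rw [hg0]
    intro ζ hζ
    simp only [mem_ball, dist_zero_right, hg]
    rw [norm_div]
    rw [div_lt_one (by
      refine norm_pos_iff.mpr (halfplane_add_conj_ne (hm _ (hTre ζ hζ)) hare))]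
    exact halfplane_abs_lt (hm _ (hTre ζ hζ)) hare
  set ζ₀ : ℂ := (z - w) / (z + (starRingEnd ℂ) w) with hζ₀
  have hzw : z + (starRingEnd ℂ) w ≠ 0 := halfplane_add_conj_ne hz hw
  have hζ₀mem : ζ₀ ∈ ball (0:ℂ) 1 := by
    simp only [mem_ball, dist_zero_right, hζ₀, norm_div]
    rw [div_lt_one (norm_pos_iff.mpr hzw)]
    exact halfplane_abs_lt hz hw
  have hww : w + (starRingEnd ℂ) w ≠ 0 := halfplane_add_conj_ne hw hw
  have hTζ₀ : T ζ₀ = z := by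
    have h1 : (1:ℂ) - ζ₀ ≠ 0 := hden ζ₀ hζ₀mem
    rw [hT]
    show (w + (starRingEnd ℂ) w * ζ₀) / (1 - ζ₀) = z
    rw [div_eq_iff h1, hζ₀]
    field_simp
    ring
  have hSch := Complex.dist_le_div_mul_dist_of_mapsTo_ball hgdiff (hgmaps.mono_right ball_subset_closedBall) hζ₀mem
  rw [hg0] at hSch
  simp only [dist_zero_right] at hSch
  have hSch2 : ‖g ζ₀‖ ≤ ‖ζ₀‖ := by
    calc ‖g ζ₀‖ ≤ 1/1 * ‖ζ₀‖ := hSch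
    _ = ‖ζ₀‖ := by norm_num
  simp only [hg] at hSch2
  rw [hTζ₀] at hSch2
  simp only [hζ₀, norm_div] at hSch2
  have d1 : 0 < ‖f z + (starRingEnd ℂ) a‖ :=
    norm_pos_iff.mpr (halfplane_add_conj_ne (hm z hz) hare)
  have d2 : 0 < ‖z + (starRingEnd ℂ) w‖ := norm_pos_iff.mpr hzw
  rw [div_le_div_iff₀ d1 d2] at hSch2
  linarith


lemma julia_key' (f : ℂ → ℂ) (hf : DifferentiableOn ℂ f {z : ℂ | 0 < z.re})
    (hm : ∀ z : ℂ, 0 < z.re → 0 < (f z).re) {y : ℝ} (hy : 0 < y) {ζ : ℂ} (hζ : 0 < ζ.re) :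
    ((f y).re ^ 2 + ((f y).im - (f ζ).im) ^ 2 + (f ζ).re ^ 2) * (y * ζ.re)
      ≤ (f y).re * (f ζ).re * (y ^ 2 + Complex.normSq ζ) := by
  have hzy : (0:ℝ) < ((y:ℂ)).re := by simpa using hy
  have h := julia_sp f hf hm hζ hzy
  have h2 : Complex.normSq ((f y - f ζ) * ((y:ℂ) + (starRingEnd ℂ) ζ))
      ≤ Complex.normSq (((y:ℂ) - ζ) * (f y + (starRingEnd ℂ) (f ζ))) := by
    have e1 : ‖(f y - f ζ) * ((y:ℂ) + (starRingEnd ℂ) ζ)‖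
        = ‖f y - f ζ‖ * ‖(y:ℂ) + (starRingEnd ℂ) ζ‖ := norm_mul _ _
    have e2 : ‖((y:ℂ) - ζ) * (f y + (starRingEnd ℂ) (f ζ))‖
        = ‖(y:ℂ) - ζ‖ * ‖f y + (starRingEnd ℂ) (f ζ)‖ := norm_mul _ _
    have h3 : ‖(f y - f ζ) * ((y:ℂ) + (starRingEnd ℂ) ζ)‖
        ≤ ‖((y:ℂ) - ζ) * (f y + (starRingEnd ℂ) (f ζ))‖ := by
      rw [e1, e2]; exact h
    have := Complex.sq_norm ((f y - f ζ) * ((y:ℂ) + (starRingEnd ℂ) ζ))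
    have := Complex.sq_norm (((y:ℂ) - ζ) * (f y + (starRingEnd ℂ) (f ζ)))
    nlinarith [norm_nonneg ((f y - f ζ) * ((y:ℂ) + (starRingEnd ℂ) ζ)),
      norm_nonneg (((y:ℂ) - ζ) * (f y + (starRingEnd ℂ) (f ζ)))]
  simp only [Complex.normSq_apply, Complex.mul_re, Complex.mul_im, Complex.sub_re,
    Complex.sub_im, Complex.add_re, Complex.add_im, Complex.conj_re, Complex.conj_im,
    Complex.ofReal_re, Complex.ofReal_im] at h2
  simp only [Complex.normSq_apply]
  ring_nf at h2 ⊢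
  linarith [h2]

lemma julia_key (f : ℂ → ℂ) (hf : DifferentiableOn ℂ f {z : ℂ | 0 < z.re})
    (hm : ∀ z : ℂ, 0 < z.re → 0 ≤ (f z).re) {y : ℝ} (hy : 0 < y) {ζ : ℂ} (hζ : 0 < ζ.re) :
    ((f y).re ^ 2 + ((f y).im - (f ζ).im) ^ 2 + (f ζ).re ^ 2) * (y * ζ.re)
      ≤ (f y).re * (f ζ).re * (y ^ 2 + Complex.normSq ζ) := by
  set G : ℝ → ℝ := fun δ =>
    ((f y).re + δ) * ((f ζ).re + δ) * (y ^ 2 + Complex.normSq ζ)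
      - (((f y).re + δ) ^ 2 + ((f y).im - (f ζ).im) ^ 2 + ((f ζ).re + δ) ^ 2) * (y * ζ.re)
    with hG
  have hδ : ∀ δ ∈ Ioi (0:ℝ), 0 ≤ G δ := by
    intro δ hδ'
    rw [mem_Ioi] at hδ'
    have hd : DifferentiableOn ℂ (fun z => f z + (δ:ℂ)) {z : ℂ | 0 < z.re} :=
      hf.add_const _
    have hm' : ∀ z : ℂ, 0 < z.re → 0 < ((fun z => f z + (δ:ℂ)) z).re := by
      intro z hz
      simp only [Complex.add_re, Complex.ofReal_re]
      linarith [hm z hz]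
    have h := julia_key' _ hd hm' hy hζ
    simp only [Complex.add_re, Complex.add_im, Complex.ofReal_re, Complex.ofReal_im,
      add_zero] at h
    rw [hG]
    simp only [sub_nonneg]
    convert h using 2 <;> ring
  have hcont : Continuous G := by fun_prop
  have htend : Tendsto G (𝓝[>] (0:ℝ)) (𝓝 (G 0)) :=
    (hcont.tendsto 0).mono_left nhdsWithin_le_nhds
  have h0 : (0:ℝ) ≤ G 0 := ge_of_tendsto htend (eventually_nhdsWithin_of_forall hδ)
  rw [hG] at h0
  simp only [add_zero] at h0
  linarith

set_option maxHeartbeats 2000000 in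
/-- Julia's lemma for the right half-plane. -/
theorem julia_halfplane (f : ℂ → ℂ)
    (hf : DifferentiableOn ℂ f {z : ℂ | 0 < z.re})
    (hmaps : ∀ z : ℂ, 0 < z.re → 0 ≤ (f z).re) :
    ∃ L : ℝ, 0 ≤ L ∧
      Tendsto (fun x : ℝ => f x / (x : ℂ)) atTop (𝓝 (L : ℂ)) ∧
      L = ⨅ ζ : {z : ℂ // 0 < z.re}, (f ζ).re / (ζ : ℂ).re ∧
      ∀ ζ : ℂ, 0 < ζ.re → L * ζ.re ≤ (f ζ).re := by
  haveI : Nonempty {z : ℂ // 0 < z.re} := ⟨⟨1, by simp⟩⟩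
  set L : ℝ := ⨅ ζ : {z : ℂ // 0 < z.re}, (f ζ).re / (ζ : ℂ).re with hLdef
  have hbdd : BddBelow (Set.range fun ζ : {z : ℂ // 0 < z.re} => (f ζ).re / (ζ : ℂ).re) := by
    refine ⟨0, ?_⟩
    rintro x ⟨ζ, rfl⟩
    exact div_nonneg (hmaps ζ ζ.2) ζ.2.le
  have hL0 : 0 ≤ L := le_ciInf fun ζ => div_nonneg (hmaps ζ ζ.2) ζ.2.le
  have hLle : ∀ ζ : ℂ, 0 < ζ.re → L * ζ.re ≤ (f ζ).re := by
    intro ζ hζ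
    have h := ciInf_le hbdd (⟨ζ, hζ⟩ : {z : ℂ // 0 < z.re})
    calc L * ζ.re ≤ ((f ζ).re / ζ.re) * ζ.re := mul_le_mul_of_nonneg_right h hζ.le
    _ = (f ζ).re := by field_simp
  have hlow : ∀ y : ℝ, 0 < y → L ≤ (f y).re / y := by
    intro y hy
    have h := ciInf_le hbdd (⟨(y:ℂ), by simpa using hy⟩ : {z : ℂ // 0 < z.re})
    simpa using h
  -- upper bound from the key inequality
  have hupper : ∀ (ζ : ℂ), 0 < ζ.re → ∀ y : ℝ, 0 < y →
      (f y).re / y ≤ (f ζ).re * (y ^ 2 + Complex.normSq ζ) / (ζ.re * y ^ 2) := by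
    intro ζ hζ y hy
    have hk := julia_key f hf hmaps hy hζ
    have hns : 0 ≤ Complex.normSq ζ := Complex.normSq_nonneg ζ
    have hre1 : 0 ≤ (f y).re := hmaps _ (by simpa using hy)
    have hre2 : 0 ≤ (f ζ).re := hmaps _ hζ
    have h1 : (f y).re * (y * ζ.re) ≤ (f ζ).re * (y ^ 2 + Complex.normSq ζ) := by
      rcases eq_or_lt_of_le hre1 with h | h
      · rw [← h]
        simp only [zero_mul]
        positivity
      · have h2 : (f y).re * ((f y).re * (y * ζ.re))
            ≤ (f y).re * ((f ζ).re * (y ^ 2 + Complex.normSq ζ)) := by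
          nlinarith [sq_nonneg ((f y).im - (f ζ).im), sq_nonneg (f ζ).re,
            mul_pos hy hζ]
        exact le_of_mul_le_mul_left h2 h
    rw [div_le_div_iff₀ hy (by positivity)]
    nlinarith [mul_le_mul_of_nonneg_right h1 hy.le]
  -- convergence of the real part
  have hre : Tendsto (fun y : ℝ => (f y).re / y) atTop (𝓝 L) := by
    rw [tendsto_order]
    constructor
    · intro b hb
      filter_upwards [eventually_gt_atTop 0] with y hy
      exact lt_of_lt_of_le hb (hlow y hy)
    · intro b hb
      obtain ⟨ζ, hζlt⟩ := exists_lt_of_ciInf_lt (show L < b from hb)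
      have hBtend : Tendsto
          (fun y : ℝ => (f ζ).re * (y ^ 2 + Complex.normSq ζ) / ((ζ:ℂ).re * y ^ 2))
          atTop (𝓝 ((f ζ).re / (ζ:ℂ).re)) := by
        have h1 : Tendsto (fun y : ℝ => (f ζ).re / (ζ:ℂ).re
            + (f ζ).re * Complex.normSq ζ / (ζ:ℂ).re * (y ^ 2)⁻¹) atTop
            (𝓝 ((f ζ).re / (ζ:ℂ).re + (f ζ).re * Complex.normSq ζ / (ζ:ℂ).re * 0)) :=
          tendsto_const_nhds.add
            (tendsto_const_nhds.mul (tendsto_pow_atTop two_ne_zero).inv_tendsto_atTop)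
        rw [mul_zero, add_zero] at h1
        apply h1.congr'
        filter_upwards [eventually_gt_atTop 0] with y hy
        have : (ζ:ℂ).re ≠ 0 := ne_of_gt ζ.2
        field_simp
      have hev : ∀ᶠ y in atTop,
          (f ζ).re * (y ^ 2 + Complex.normSq ζ) / ((ζ:ℂ).re * y ^ 2) < b :=
        hBtend.eventually_lt_const hζlt
      filter_upwards [hev, eventually_gt_atTop 0] with y h1 h2
      exact lt_of_le_of_lt (hupper ζ ζ.2 y h2) h1
  -- the auxiliary function g = f - L z
  set g : ℂ → ℂ := fun z => f z - (L:ℂ) * z with hgdef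
  have hgdiff : DifferentiableOn ℂ g {z : ℂ | 0 < z.re} :=
    hf.sub ((differentiable_const _).mul differentiable_id).differentiableOn
  have hgre : ∀ z : ℂ, 0 < z.re → (g z).re = (f z).re - L * z.re := by
    intro z hz
    simp [hgdef, Complex.sub_re, Complex.mul_re]
  have hgmaps : ∀ z : ℂ, 0 < z.re → 0 ≤ (g z).re := by
    intro z hz
    rw [hgre z hz]
    linarith [hLle z hz]
  have h1re : (0:ℝ) < (1:ℂ).re := by simp
  set C : ℝ := (g 1).re with hC
  set m : ℝ := (g 1).im with hm
  have hC0 : 0 ≤ C := hgmaps 1 h1re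
  -- imaginary part control
  set q : ℝ → ℝ := fun y => ((f y).im - m) / y with hq
  set D : ℝ → ℝ := fun y => C * (((f y).re / y - L) * (1 + (y ^ 2)⁻¹)) with hD
  have hDtend : Tendsto D atTop (𝓝 0) := by
    have h1 : Tendsto (fun y : ℝ => (f y).re / y - L) atTop (𝓝 0) := by
      simpa using hre.sub (tendsto_const_nhds (x := L))
    have h2 : Tendsto (fun y : ℝ => 1 + ((y:ℝ) ^ 2)⁻¹) atTop (𝓝 (1 + 0)) :=
      tendsto_const_nhds.add (tendsto_pow_atTop two_ne_zero).inv_tendsto_atTop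
    have := (h1.mul h2).const_mul C
    simpa [hD] using this
  have hqsq : ∀ y : ℝ, 0 < y → q y ^ 2 ≤ D y := by
    intro y hy
    have hk := julia_key g hgdiff hgmaps hy h1re
    rw [Complex.normSq_one] at hk
    simp only [Complex.one_re, mul_one] at hk
    have hgy : (g y).re = (f y).re - L * y := by
      have := hgre y (by simpa using hy)
      simpa using this
    have hgyim : (g y).im = (f y).im := by
      simp [hgdef, Complex.sub_im, Complex.mul_im]
    rw [hgy, hgyim, ← hC, ← hm] at hk
    have hr0 : 0 ≤ (f y).re - L * y := by
      have := hlow y hy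
      rw [le_div_iff₀ hy] at this
      linarith
    have hkey2 : ((f y).im - m) ^ 2 * y ≤ ((f y).re - L * y) * C * (y ^ 2 + 1) := by
      nlinarith [mul_nonneg (sq_nonneg ((f y).re - L * y)) hy.le,
        mul_nonneg (sq_nonneg C) hy.le]
    have he : q y ^ 2 = ((f y).im - m) ^ 2 / y ^ 2 := by
      rw [hq]; rw [div_pow]
    rw [he, div_le_iff₀ (by positivity)]
    have heD : D y * y ^ 2 = ((f y).re - L * y) * C * (y ^ 2 + 1) / y := by
      rw [hD]
      field_simp
    rw [heD, le_div_iff₀ hy]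
    nlinarith [hkey2, hy]
  have hqsqtend : Tendsto (fun y : ℝ => q y ^ 2) atTop (𝓝 0) := by
    apply tendsto_of_tendsto_of_tendsto_of_le_of_le' tendsto_const_nhds hDtend
    · filter_upwards with y; exact sq_nonneg _
    · filter_upwards [eventually_gt_atTop 0] with y hy; exact hqsq y hy
  have hqabs : Tendsto (fun y : ℝ => |q y|) atTop (𝓝 0) := by
    have := hqsqtend.sqrt
    simpa [Real.sqrt_sq_eq_abs] using this
  have hqtend : Tendsto q atTop (𝓝 0) := by
    have hneg := hqabs.neg
    rw [neg_zero] at hneg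
    apply tendsto_of_tendsto_of_tendsto_of_le_of_le hneg hqabs
    · intro y; exact neg_abs_le _
    · intro y; exact le_abs_self _
  have him : Tendsto (fun y : ℝ => (f y).im / y) atTop (𝓝 0) := by
    have h2 : Tendsto (fun y : ℝ => q y + m * y⁻¹) atTop (𝓝 (0 + m * 0)) :=
      hqtend.add (tendsto_const_nhds.mul tendsto_inv_atTop_zero)
    rw [mul_zero, add_zero] at h2
    apply h2.congr'
    filter_upwards [eventually_gt_atTop 0] with y hy
    rw [hq]
    field_simp
    ring
  -- combine
  have hfinal : Tendsto (fun x : ℝ => f x / (x : ℂ)) atTop (𝓝 (L : ℂ)) := by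
    have h1 : Tendsto (fun y : ℝ => (((f y).re / y : ℝ) : ℂ)
        + (((f y).im / y : ℝ) : ℂ) * Complex.I) atTop (𝓝 ((L:ℂ) + ((0:ℝ):ℂ) * Complex.I)) :=
      ((Complex.continuous_ofReal.tendsto L).comp hre).add
        (((Complex.continuous_ofReal.tendsto 0).comp him).mul_const Complex.I)
    rw [show ((0:ℝ):ℂ) * Complex.I = 0 by simp, add_zero] at h1
    apply h1.congr'
    filter_upwards [eventually_gt_atTop 0] with y hy
    have hyne : (y:ℂ) ≠ 0 := by
      simpa using ne_of_gt hy
    rw [eq_comm]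
    rw [← Complex.re_add_im (f y)]
    push_cast
    field_simp
    simp [mul_comm]
  exact ⟨L, hL0, hfinal, hLdef, hLle⟩
end

section
/- Let f(z) = α + βz + ∫₀^∞ (1 − e^{−λz}) τ(dλ) for z in the right half-plane ℍ, where α, β ≥ 0 and τ is a non-negative Borel measure on (0,∞) with ∫ min{λ,1} τ(dλ) < ∞. Suppose f'(0) := lim_{x→0⁺} f'(x) and f''(0) := lim_{x→0⁺} f''(x) are finite. Then for all z ∈ ℍ: |f(z) − z| ≤ f(0) + |(f'(0) − 1)z| + (1/2)|f''(0) z²|, where f(0) = α. -/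
open Set MeasureTheory Filter Topology

section BernsteinAux

open intervalIntegral

lemma exp_bd1 (t : ℝ) (ht : 0 ≤ t) : t * Real.exp (-t) ≤ 1 := by
  rw [Real.exp_neg, mul_inv_le_iff₀ (Real.exp_pos t), one_mul]
  linarith [Real.add_one_le_exp t]

lemma exp_bd2 (t : ℝ) (ht : 0 ≤ t) : t^2 * Real.exp (-t) ≤ 4 := by
  have h := Real.add_one_le_exp (t/2)
  have h2 : t ≤ 2 * Real.exp (t/2) := by nlinarith [Real.exp_pos (t/2)]
  have he : Real.exp (t/2) * Real.exp (t/2) = Real.exp t := by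
    rw [← Real.exp_add]; ring_nf
  have : t^2 ≤ 4 * Real.exp t := by nlinarith [Real.exp_pos (t/2)]
  rw [Real.exp_neg, mul_inv_le_iff₀ (Real.exp_pos t)]
  linarith

lemma deriv_aux (w : ℂ) (t : ℝ) :
    HasDerivAt (fun s : ℝ => 1 - Complex.exp (-(s * w))) (w * Complex.exp (-(t * w))) t := by
  have h : HasDerivAt (fun u : ℂ => 1 - Complex.exp (-(u * w)))
      (w * Complex.exp (-((t:ℂ) * w))) (t : ℂ) := by
    have h1 : HasDerivAt (fun u : ℂ => -(u * w)) (-w) (t : ℂ) := by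
      have := ((hasDerivAt_id ((t:ℂ))).mul_const w).neg; rw [one_mul] at this; exact this
    have := (Complex.hasDerivAt_exp _).comp (t:ℂ) h1
    have h2 := this.const_sub 1
    refine h2.congr_deriv ?_; ring
  exact h.comp_ofReal

lemma exp_half (w : ℂ) (hw : 0 ≤ w.re) (t : ℝ) (ht : 0 ≤ t) :
    ‖(Complex.exp (-(t * w)))‖ ≤ 1 := by
  rw [Complex.norm_exp]
  apply Real.exp_le_one_iff.mpr
  simp only [Complex.neg_re, Complex.mul_re, Complex.ofReal_re, Complex.ofReal_im]
  nlinarith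

lemma key_bd1 (w : ℂ) (hw : 0 ≤ w.re) : ‖(1 - Complex.exp (-w))‖ ≤ ‖w‖ := by
  have heq : (∫ t in (0:ℝ)..1, w * Complex.exp (-(t * w))) =
      (1 - Complex.exp (-((1:ℝ) * w))) - (1 - Complex.exp (-((0:ℝ) * w))) := by
    apply integral_eq_sub_of_hasDerivAt (fun t _ => deriv_aux w t)
    apply Continuous.intervalIntegrable
    fun_prop
  simp only [Complex.ofReal_one, one_mul, Complex.ofReal_zero, zero_mul, neg_zero,
    Complex.exp_zero, sub_self, sub_zero] at heq
  rw [← heq]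
  have := intervalIntegral.norm_integral_le_of_norm_le_const (C := ‖w‖)
    (f := fun t : ℝ => w * Complex.exp (-(t * w))) (a := 0) (b := 1) ?_
  · simpa using this
  · intro t ht
    rw [Set.uIoc_of_le (by norm_num : (0:ℝ) ≤ 1)] at ht
    rw [norm_mul]
    calc ‖w‖ * ‖(Complex.exp (-(t*w)))‖
        ≤ ‖w‖ * 1 := by
          gcongr; exact exp_half w hw t ht.1.le
      _ = ‖w‖ := mul_one _

lemma key_bd2 (w : ℂ) (hw : 0 ≤ w.re) :
    ‖(1 - Complex.exp (-w) - w)‖ ≤ ‖w‖ ^ 2 / 2 := by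
  have hd : ∀ t : ℝ, HasDerivAt (fun s : ℝ => 1 - Complex.exp (-(s * w)) - s * w)
      (w * Complex.exp (-(t * w)) - w) t := by
    intro t
    have h2 : HasDerivAt (fun s : ℝ => (s : ℂ) * w) w t := by
      simpa using (Complex.ofRealCLM.hasDerivAt (x := t)).mul_const w
    exact (deriv_aux w t).sub h2
  have heq : (∫ t in (0:ℝ)..1, (w * Complex.exp (-(t * w)) - w)) =
      (1 - Complex.exp (-((1:ℝ) * w)) - (1:ℝ) * w) -
      (1 - Complex.exp (-((0:ℝ) * w)) - (0:ℝ) * w) := by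
    apply integral_eq_sub_of_hasDerivAt (fun t _ => hd t)
    apply Continuous.intervalIntegrable; continuity
  simp only [Complex.ofReal_one, one_mul, Complex.ofReal_zero, zero_mul, neg_zero,
    Complex.exp_zero, sub_self, sub_zero] at heq
  rw [← heq]
  have hbd : ∀ t ∈ Set.Ioc (0:ℝ) 1, ‖w * Complex.exp (-(t * w)) - w‖ ≤ t * ‖w‖ ^ 2 := by
    intro t ht
    have h1 : w * Complex.exp (-(t * w)) - w = -(w * (1 - Complex.exp (-((t:ℂ) * w)))) := by ring
    rw [h1, norm_neg, norm_mul]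
    have h2 : ‖(1 - Complex.exp (-((t:ℂ) * w)))‖ ≤ ‖((t:ℂ) * w)‖ := by
      apply key_bd1
      simp only [Complex.mul_re, Complex.ofReal_re, Complex.ofReal_im]
      nlinarith [ht.1.le]
    calc ‖w‖ * ‖(1 - Complex.exp (-((t:ℂ) * w)))‖
        ≤ ‖w‖ * ‖((t:ℂ) * w)‖ := by gcongr
      _ = t * ‖w‖ ^ 2 := by
          rw [norm_mul, Complex.norm_real, Real.norm_eq_abs, abs_of_pos ht.1]; ring
  calc ‖∫ t in (0:ℝ)..1, (w * Complex.exp (-(t * w)) - w)‖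
      ≤ |∫ t in (0:ℝ)..1, t * ‖w‖ ^ 2| := by
        apply intervalIntegral.norm_integral_le_abs_of_norm_le
        · rw [MeasureTheory.ae_restrict_iff' measurableSet_uIoc]
          filter_upwards with t ht
          rw [Set.uIoc_of_le (by norm_num : (0:ℝ) ≤ 1)] at ht
          exact hbd t ht
        · apply Continuous.intervalIntegrable; continuity
    _ = ‖w‖ ^ 2 / 2 := by
        rw [intervalIntegral.integral_mul_const, integral_id]
        rw [abs_of_nonneg (by positivity)]; ring

lemma integrable_min (τ : Measure ℝ)
    (hτ : (∫⁻ l in Set.Ioi (0:ℝ), ENNReal.ofReal (min l 1) ∂τ) < ⊤) (C : ℝ) :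
    Integrable (fun l => C * min l 1) (τ.restrict (Set.Ioi 0)) := by
  constructor
  · exact (Continuous.aestronglyMeasurable (by continuity))
  · rw [hasFiniteIntegral_iff_norm]
    calc ∫⁻ l, ENNReal.ofReal ‖C * min l 1‖ ∂(τ.restrict (Set.Ioi 0))
        ≤ ∫⁻ l, ENNReal.ofReal |C| * ENNReal.ofReal (min l 1) ∂(τ.restrict (Set.Ioi 0)) := by
          apply lintegral_mono_ae
          rw [ae_restrict_iff' measurableSet_Ioi]
          filter_upwards with l hl
          rw [← ENNReal.ofReal_mul (abs_nonneg C)]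
          apply ENNReal.ofReal_le_ofReal
          rw [Real.norm_eq_abs, abs_mul]
          gcongr
          rw [abs_of_nonneg (le_min (le_of_lt hl) zero_le_one)]
      _ = ENNReal.ofReal |C| * ∫⁻ l in Set.Ioi (0:ℝ), ENNReal.ofReal (min l 1) ∂τ := by
          rw [lintegral_const_mul]
          exact (ENNReal.measurable_ofReal.comp ((measurable_id.min measurable_const)))
      _ < ⊤ := ENNReal.mul_lt_top ENNReal.ofReal_lt_top hτ

lemma integrable_of_min_bound {E : Type*} [NormedAddCommGroup E] (τ : Measure ℝ)
    (hτ : (∫⁻ l in Set.Ioi (0:ℝ), ENNReal.ofReal (min l 1) ∂τ) < ⊤)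
    {g : ℝ → E} (hm : AEStronglyMeasurable g (τ.restrict (Set.Ioi 0))) (C : ℝ)
    (hb : ∀ l ∈ Set.Ioi (0:ℝ), ‖g l‖ ≤ C * min l 1) :
    Integrable g (τ.restrict (Set.Ioi 0)) := by
  apply Integrable.mono' (integrable_min τ hτ C) hm
  rw [ae_restrict_iff' measurableSet_Ioi]
  filter_upwards with l hl
  exact hb l hl

variable (τ : Measure ℝ)

lemma int1 (hτ : (∫⁻ l in Set.Ioi (0:ℝ), ENNReal.ofReal (min l 1) ∂τ) < ⊤)
    {x : ℝ} (hx : 0 < x) :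
    Integrable (fun l => l * Real.exp (-(l * x))) (τ.restrict (Set.Ioi 0)) := by
  apply integrable_of_min_bound τ hτ (Continuous.aestronglyMeasurable (by continuity)) (1 + 1/x)
  intro l hl
  simp only [Set.mem_Ioi] at hl
  have he : Real.exp (-(l*x)) ≤ 1 := Real.exp_le_one_iff.mpr (by nlinarith)
  have hepos := Real.exp_pos (-(l*x))
  rw [Real.norm_eq_abs, abs_of_nonneg (by positivity)]
  rcases le_total l 1 with h | h
  · rw [min_eq_left h]
    nlinarith [one_div_nonneg.mpr hx.le, mul_le_mul_of_nonneg_left he hl.le]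
  · rw [min_eq_right h]
    have := exp_bd1 (l*x) (by positivity)
    rw [mul_one]
    have hxinv : l * Real.exp (-(l*x)) ≤ 1/x := by
      rw [le_div_iff₀ hx]
      calc l * Real.exp (-(l*x)) * x = l * x * Real.exp (-(l*x)) := by ring
        _ ≤ 1 := this
    linarith [one_div_nonneg.mpr hx.le]

lemma int2 (hτ : (∫⁻ l in Set.Ioi (0:ℝ), ENNReal.ofReal (min l 1) ∂τ) < ⊤)
    {x : ℝ} (hx : 0 < x) :
    Integrable (fun l => l^2 * Real.exp (-(l * x))) (τ.restrict (Set.Ioi 0)) := by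
  apply integrable_of_min_bound τ hτ (Continuous.aestronglyMeasurable (by continuity)) (1 + 4/x^2)
  intro l hl
  simp only [Set.mem_Ioi] at hl
  have he : Real.exp (-(l*x)) ≤ 1 := Real.exp_le_one_iff.mpr (by nlinarith)
  have hepos := Real.exp_pos (-(l*x))
  rw [Real.norm_eq_abs, abs_of_nonneg (by positivity)]
  rcases le_total l 1 with h | h
  · rw [min_eq_left h]
    have h4 : (0:ℝ) ≤ 4/x^2 := by positivity
    nlinarith [mul_le_mul_of_nonneg_left he (sq_nonneg l)]
  · rw [min_eq_right h]
    have := exp_bd2 (l*x) (by positivity)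
    rw [mul_one]
    have hxinv : l^2 * Real.exp (-(l*x)) ≤ 4/x^2 := by
      rw [le_div_iff₀ (by positivity)]
      calc l^2 * Real.exp (-(l*x)) * x^2 = (l*x)^2 * Real.exp (-(l*x)) := by ring
        _ ≤ 4 := this
    have : (0:ℝ) ≤ 4/x^2 := by positivity
    linarith

lemma intC (hτ : (∫⁻ l in Set.Ioi (0:ℝ), ENNReal.ofReal (min l 1) ∂τ) < ⊤)
    {z : ℂ} (hz : 0 < z.re) :
    Integrable (fun l : ℝ => 1 - Complex.exp (-((l:ℂ) * z))) (τ.restrict (Set.Ioi 0)) := by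
  apply integrable_of_min_bound τ hτ (Continuous.aestronglyMeasurable (by continuity))
    (‖z‖ + 2)
  intro l hl
  simp only [Set.mem_Ioi] at hl
  have hre : 0 ≤ ((l:ℂ) * z).re := by
    simp only [Complex.mul_re, Complex.ofReal_re, Complex.ofReal_im]
    nlinarith
  rcases le_total l 1 with h | h
  · rw [min_eq_left h]
    calc ‖1 - Complex.exp (-((l:ℂ) * z))‖ ≤ ‖((l:ℂ) * z)‖ := key_bd1 _ hre
      _ = l * ‖z‖ := by rw [norm_mul, Complex.norm_real, Real.norm_eq_abs, abs_of_pos hl]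
      _ ≤ (‖z‖ + 2) * l := by nlinarith
  · rw [min_eq_right h, mul_one]
    calc ‖1 - Complex.exp (-((l:ℂ) * z))‖
        ≤ ‖(1:ℂ)‖ + ‖Complex.exp (-((l:ℂ) * z))‖ := norm_sub_le _ _
      _ ≤ 1 + 1 := by
          gcongr
          · simp
          · rw [Complex.norm_exp]
            apply Real.exp_le_one_iff.mpr
            simpa using hre
      _ ≤ ‖z‖ + 2 := by linarith [norm_nonneg z]

variable (τ : Measure ℝ)

lemma hasDerivAt_inner (l y : ℝ) :
    HasDerivAt (fun y : ℝ => 1 - Real.exp (-(l * y))) (l * Real.exp (-(l * y))) y := by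
  have h1 : HasDerivAt (fun y : ℝ => -(l * y)) (-l) y := by
    have := ((hasDerivAt_id y).const_mul l).neg; rw [mul_one] at this; exact this
  have h2 := (Real.hasDerivAt_exp (-(l * y))).comp y h1
  have h3 := h2.const_sub 1
  refine h3.congr_deriv ?_; simp [mul_comm]

lemma hasDerivAt_inner2 (l y : ℝ) :
    HasDerivAt (fun y : ℝ => l * Real.exp (-(l * y))) (-(l^2 * Real.exp (-(l * y)))) y := by
  have h1 : HasDerivAt (fun y : ℝ => -(l * y)) (-l) y := by
    have := ((hasDerivAt_id y).const_mul l).neg; rw [mul_one] at this; exact this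
  have h2 := ((Real.hasDerivAt_exp (-(l * y))).comp y h1).const_mul l
  refine h2.congr_deriv ?_; ring

lemma intF (hτ : (∫⁻ l in Set.Ioi (0:ℝ), ENNReal.ofReal (min l 1) ∂τ) < ⊤)
    {x : ℝ} (hx : 0 < x) :
    Integrable (fun l : ℝ => 1 - Real.exp (-(l * x))) (τ.restrict (Set.Ioi 0)) := by
  apply integrable_of_min_bound τ hτ (Continuous.aestronglyMeasurable (by continuity)) (x + 1)
  intro l hl
  simp only [Set.mem_Ioi] at hl
  have he : Real.exp (-(l*x)) ≤ 1 := Real.exp_le_one_iff.mpr (by nlinarith)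
  have he2 : 1 - Real.exp (-(l*x)) ≤ l * x := by
    have := Real.add_one_le_exp (-(l*x)); linarith
  have hepos := Real.exp_pos (-(l*x))
  rw [Real.norm_eq_abs, abs_of_nonneg (by linarith)]
  rcases le_total l 1 with h | h
  · rw [min_eq_left h]; nlinarith
  · rw [min_eq_right h, mul_one]; nlinarith

lemma D1 (hτ : (∫⁻ l in Set.Ioi (0:ℝ), ENNReal.ofReal (min l 1) ∂τ) < ⊤)
    {x : ℝ} (hx : 0 < x) :
    HasDerivAt (fun y : ℝ => ∫ l in Set.Ioi (0:ℝ), (1 - Real.exp (-(l * y))) ∂τ)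
      (∫ l in Set.Ioi (0:ℝ), l * Real.exp (-(l * x)) ∂τ) x := by
  have key := hasDerivAt_integral_of_dominated_loc_of_deriv_le
    (μ := τ.restrict (Set.Ioi 0)) (x₀ := x)
    (F := fun y l => 1 - Real.exp (-(l * y)))
    (F' := fun y l => l * Real.exp (-(l * y)))
    (bound := fun l => l * Real.exp (-(l * (x/2))))
    (Metric.ball_mem_nhds x (half_pos hx))
    (Filter.Eventually.of_forall fun y => Continuous.aestronglyMeasurable (by continuity))
    (intF τ hτ hx)
    (Continuous.aestronglyMeasurable (by continuity))
    ?_ (int1 τ hτ (half_pos hx))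
    (Filter.Eventually.of_forall fun l y _ => hasDerivAt_inner l y)
  · exact key.2
  · rw [ae_restrict_iff' measurableSet_Ioi]
    filter_upwards with l hl y hy
    simp only [Set.mem_Ioi] at hl
    simp only [Metric.mem_ball, Real.dist_eq] at hy
    have hy2 : x/2 ≤ y := by cases abs_lt.mp hy; linarith
    rw [Real.norm_eq_abs, abs_of_nonneg (by positivity)]
    have : Real.exp (-(l * y)) ≤ Real.exp (-(l * (x/2))) := Real.exp_le_exp.mpr (by nlinarith)
    nlinarith [Real.exp_pos (-(l*y))]

lemma D2 (hτ : (∫⁻ l in Set.Ioi (0:ℝ), ENNReal.ofReal (min l 1) ∂τ) < ⊤)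
    {x : ℝ} (hx : 0 < x) :
    HasDerivAt (fun y : ℝ => ∫ l in Set.Ioi (0:ℝ), l * Real.exp (-(l * y)) ∂τ)
      (-∫ l in Set.Ioi (0:ℝ), l^2 * Real.exp (-(l * x)) ∂τ) x := by
  have key := hasDerivAt_integral_of_dominated_loc_of_deriv_le
    (μ := τ.restrict (Set.Ioi 0)) (x₀ := x)
    (F := fun y l => l * Real.exp (-(l * y)))
    (F' := fun y l => -(l^2 * Real.exp (-(l * y))))
    (bound := fun l => l^2 * Real.exp (-(l * (x/2))))
    (Metric.ball_mem_nhds x (half_pos hx))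
    (Filter.Eventually.of_forall fun y => Continuous.aestronglyMeasurable (by continuity))
    (int1 τ hτ hx)
    (Continuous.aestronglyMeasurable (by continuity))
    ?_ (int2 τ hτ (half_pos hx))
    (Filter.Eventually.of_forall fun l y _ => hasDerivAt_inner2 l y)
  · have := key.2
    rw [MeasureTheory.integral_neg] at this
    exact this
  · rw [ae_restrict_iff' measurableSet_Ioi]
    filter_upwards with l hl y hy
    simp only [Set.mem_Ioi] at hl
    simp only [Metric.mem_ball, Real.dist_eq] at hy
    have hy2 : x/2 ≤ y := by cases abs_lt.mp hy; linarith
    rw [Real.norm_eq_abs, abs_neg, abs_of_nonneg (by positivity)]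
    have : Real.exp (-(l * y)) ≤ Real.exp (-(l * (x/2))) := Real.exp_le_exp.mpr (by nlinarith)
    nlinarith [Real.exp_pos (-(l*y)), sq_nonneg l]

lemma mono_limit (τ : Measure ℝ) (p : ℕ) (c : ℝ)
    (hint : ∀ x : ℝ, 0 < x → Integrable (fun l => l^p * Real.exp (-(l*x))) (τ.restrict (Set.Ioi 0)))
    (hlim : Tendsto (fun n : ℕ => ∫ l in Set.Ioi (0:ℝ), l^p * Real.exp (-(l * (1/(n+1)))) ∂τ)
      atTop (𝓝 c)) :
    Integrable (fun l => l^p) (τ.restrict (Set.Ioi 0)) ∧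
      (∫ l in Set.Ioi (0:ℝ), l^p ∂τ) = c := by
  set μ := τ.restrict (Set.Ioi 0) with hμ
  have hxpos : ∀ n : ℕ, (0:ℝ) < 1/(n+1) := fun n => by positivity
  have hanti : ∀ n m : ℕ, n ≤ m → (1:ℝ)/(m+1) ≤ 1/(n+1) := by
    intro n m h
    apply div_le_div_of_nonneg_left (by norm_num) (by positivity)
    have : (n:ℝ) ≤ m := Nat.cast_le.mpr h
    linarith
  -- ae nonneg facts on μ
  have haeIoi : ∀ᵐ l ∂μ, l ∈ Set.Ioi (0:ℝ) := by
    rw [hμ, ae_restrict_iff' measurableSet_Ioi]; filter_upwards with l hl; exact hl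
  -- lintegral convergence (monotone convergence)
  have h1 : Tendsto (fun n : ℕ => ∫⁻ l, ENNReal.ofReal (l^p * Real.exp (-(l * (1/(n+1))))) ∂μ)
      atTop (𝓝 (∫⁻ l, ENNReal.ofReal (l^p) ∂μ)) := by
    apply lintegral_tendsto_of_tendsto_of_monotone
    · intro n
      exact (ENNReal.measurable_ofReal.comp (by measurability)).aemeasurable
    · filter_upwards [haeIoi] with l hl
      intro n m hnm
      apply ENNReal.ofReal_le_ofReal
      have : Real.exp (-(l * (1/(n+1)))) ≤ Real.exp (-(l * (1/(m+1)))) := by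
        apply Real.exp_le_exp.mpr
        have := hanti n m hnm
        nlinarith [le_of_lt (Set.mem_Ioi.mp hl)]
      have hl' : (0:ℝ) < l := hl
      have hlp : (0:ℝ) ≤ l^p := by positivity
      nlinarith
    · filter_upwards [haeIoi] with l hl
      have : Tendsto (fun n : ℕ => l^p * Real.exp (-(l * (1/(n+1))))) atTop (𝓝 (l^p)) := by
        have h0 : Tendsto (fun n : ℕ => (1:ℝ)/(n+1)) atTop (𝓝 0) :=
          tendsto_one_div_add_atTop_nhds_zero_nat
        have := ((h0.const_mul l).neg.rexp).const_mul (l^p)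
        simpa [mul_comm] using this
      exact (ENNReal.continuous_ofReal.tendsto _).comp this
  -- identify each lintegral with ofReal of the integral
  have h2 : ∀ n : ℕ, (∫⁻ l, ENNReal.ofReal (l^p * Real.exp (-(l * (1/(n+1))))) ∂μ)
      = ENNReal.ofReal (∫ l, l^p * Real.exp (-(l * (1/(n+1)))) ∂μ) := by
    intro n
    rw [ofReal_integral_eq_lintegral_ofReal (hint _ (hxpos n))]
    filter_upwards [haeIoi] with l hl
    have := le_of_lt (Set.mem_Ioi.mp hl)
    positivity
  have h3 : Tendsto (fun n : ℕ => ENNReal.ofReal (∫ l, l^p * Real.exp (-(l * (1/(n+1)))) ∂μ))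
      atTop (𝓝 (ENNReal.ofReal c)) :=
    (ENNReal.continuous_ofReal.tendsto _).comp hlim
  have h4 : (∫⁻ l, ENNReal.ofReal (l^p) ∂μ) = ENNReal.ofReal c := by
    apply tendsto_nhds_unique _ h3
    simpa only [h2] using h1
  have h5 : Integrable (fun l : ℝ => l^p) μ := by
    constructor
    · exact (Continuous.aestronglyMeasurable (by continuity))
    · rw [hasFiniteIntegral_iff_norm]
      have : (∫⁻ l, ENNReal.ofReal ‖l^p‖ ∂μ) = ∫⁻ l, ENNReal.ofReal (l^p) ∂μ := by
        apply lintegral_congr_ae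
        filter_upwards [haeIoi] with l hl
        have hl' : (0:ℝ) < l := hl
        rw [Real.norm_eq_abs, abs_of_nonneg (by positivity)]
      rw [this, h4]
      exact ENNReal.ofReal_lt_top
  refine ⟨h5, ?_⟩
  have h6 : ENNReal.ofReal (∫ l, l^p ∂μ) = ENNReal.ofReal c := by
    rw [ofReal_integral_eq_lintegral_ofReal h5 ?_, h4]
    filter_upwards [haeIoi] with l hl
    have hl' : (0:ℝ) < l := hl
    positivity
  have hc : 0 ≤ c := by
    apply le_of_tendsto_of_tendsto' tendsto_const_nhds hlim
    intro n
    apply MeasureTheory.integral_nonneg_of_ae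
    filter_upwards [haeIoi] with l hl
    have := le_of_lt (Set.mem_Ioi.mp hl)
    positivity
  have hint_nn : 0 ≤ ∫ l, l^p ∂μ := by
    apply MeasureTheory.integral_nonneg_of_ae
    filter_upwards [haeIoi] with l hl
    have hl' : (0:ℝ) < l := hl
    positivity
  rwa [ENNReal.ofReal_eq_ofReal_iff hint_nn hc] at h6

end BernsteinAux

/-- Rigidity property of Bernstein functions: if f has the Lévy–Khintchine-type
representation and finite first and second derivatives at 0⁺ (equal to A and B),
then |f(z) - z| ≤ f(0) + |(A-1)z| + |Bz²|/2 on the right half-plane. -/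
theorem bernstein_rigidity (α β : ℝ) (hα : 0 ≤ α) (hβ : 0 ≤ β)
    (τ : Measure ℝ)
    (hτ : (∫⁻ l in Set.Ioi (0:ℝ), ENNReal.ofReal (min l 1) ∂τ) < ⊤)
    (f : ℂ → ℂ)
    (hf : ∀ z : ℂ, 0 < z.re →
      f z = (α : ℂ) + (β : ℂ) * z +
        ∫ l in Set.Ioi (0:ℝ), (1 - Complex.exp (-((l : ℂ) * z))) ∂τ)
    (g : ℝ → ℝ) (hg : ∀ x : ℝ, 0 < x → g x = (f x).re)
    (A B : ℝ)
    (hA : Tendsto (deriv g) (𝓝[>] (0:ℝ)) (𝓝 A))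
    (hB : Tendsto (deriv (deriv g)) (𝓝[>] (0:ℝ)) (𝓝 B)) :
    ∀ z : ℂ, 0 < z.re →
      ‖f z - z‖ ≤
        α + ‖((A : ℂ) - 1) * z‖ + (1/2) * ‖(B : ℂ) * z ^ 2‖ := by
  -- g agrees with an explicit formula on Ioi 0
  have hgG : ∀ x : ℝ, 0 < x →
      g x = α + β * x + ∫ l in Set.Ioi (0:ℝ), (1 - Real.exp (-(l * x))) ∂τ := by
    intro x hx
    have hzre : 0 < ((x:ℂ)).re := by simpa using hx
    rw [hg x hx, hf _ hzre]
    simp only [Complex.add_re, Complex.ofReal_re, Complex.mul_re, Complex.ofReal_im]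
    have hre : (∫ l in Set.Ioi (0:ℝ), (1 - Complex.exp (-((l : ℂ) * (x:ℂ)))) ∂τ).re
        = ∫ l in Set.Ioi (0:ℝ), (1 - Real.exp (-(l * x))) ∂τ := by
      have hir := integral_re (intC τ hτ hzre)
      simp only [RCLike.re_to_complex] at hir
      rw [← hir]
      apply integral_congr_ae
      apply Filter.Eventually.of_forall
      intro l
      show (1 - Complex.exp (-((l:ℂ) * (x:ℂ)))).re = 1 - Real.exp (-(l * x))
      have h1 : -((l:ℂ) * (x:ℂ)) = ((-(l * x) : ℝ) : ℂ) := by push_cast; ring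
      rw [h1, ← Complex.ofReal_exp, Complex.sub_re, Complex.one_re, Complex.ofReal_re]
    rw [hre]
    ring
  -- first derivative formula
  have hderiv : ∀ x : ℝ, 0 < x →
      deriv g x = β + ∫ l in Set.Ioi (0:ℝ), l * Real.exp (-(l * x)) ∂τ := by
    intro x hx
    have hev : g =ᶠ[𝓝 x] fun y => α + β * y + ∫ l in Set.Ioi (0:ℝ), (1 - Real.exp (-(l * y))) ∂τ := by
      filter_upwards [Ioi_mem_nhds hx] with y hy
      exact hgG y hy
    rw [hev.deriv_eq]
    have hG : HasDerivAt (fun y : ℝ => α + β * y + ∫ l in Set.Ioi (0:ℝ), (1 - Real.exp (-(l * y))) ∂τ)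
        (β + ∫ l in Set.Ioi (0:ℝ), l * Real.exp (-(l * x)) ∂τ) x := by
      have h1 : HasDerivAt (fun y : ℝ => α + β * y) β x := by
        simpa using ((hasDerivAt_id x).const_mul β).const_add α
      exact h1.add (D1 τ hτ hx)
    exact hG.deriv
  -- second derivative formula
  have hderiv2 : ∀ x : ℝ, 0 < x →
      deriv (deriv g) x = -∫ l in Set.Ioi (0:ℝ), l^2 * Real.exp (-(l * x)) ∂τ := by
    intro x hx
    have hev : deriv g =ᶠ[𝓝 x] fun y => β + ∫ l in Set.Ioi (0:ℝ), l * Real.exp (-(l * y)) ∂τ := by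
      filter_upwards [Ioi_mem_nhds hx] with y hy
      exact hderiv y hy
    rw [hev.deriv_eq]
    exact (((D2 τ hτ hx)).const_add β).deriv
  -- the approximating sequence
  have hxs : Tendsto (fun n : ℕ => (1:ℝ)/(n+1)) atTop (𝓝[>] (0:ℝ)) := by
    apply tendsto_nhdsWithin_of_tendsto_nhds_of_eventually_within
    · exact tendsto_one_div_add_atTop_nhds_zero_nat
    · filter_upwards with n
      have : (0:ℝ) < 1/(n+1) := by positivity
      exact this
  have hxpos : ∀ n : ℕ, (0:ℝ) < 1/(n+1) := fun n => by positivity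
  -- limits of the integrals
  have limA : Tendsto (fun n : ℕ => ∫ l in Set.Ioi (0:ℝ), l^1 * Real.exp (-(l * (1/(n+1)))) ∂τ)
      atTop (𝓝 (A - β)) := by
    have h1 : Tendsto (fun n : ℕ => deriv g (1/(n+1))) atTop (𝓝 A) := hA.comp hxs
    have h2 := h1.sub_const β
    apply h2.congr
    intro n
    rw [hderiv _ (hxpos n)]
    simp [pow_one]
  have limB : Tendsto (fun n : ℕ => ∫ l in Set.Ioi (0:ℝ), l^2 * Real.exp (-(l * (1/(n+1)))) ∂τ)
      atTop (𝓝 (-B)) := by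
    have h1 : Tendsto (fun n : ℕ => deriv (deriv g) (1/(n+1))) atTop (𝓝 B) := hB.comp hxs
    have h2 := h1.neg
    apply h2.congr
    intro n
    rw [hderiv2 _ (hxpos n)]
    ring
  have hM1 := mono_limit τ 1 (A - β) (fun x hx => by simpa [pow_one] using int1 τ hτ hx) limA
  have hM2 := mono_limit τ 2 (-B) (fun x hx => int2 τ hτ hx) limB
  have hBnp : 0 ≤ -B := by
    apply le_of_tendsto_of_tendsto' tendsto_const_nhds limB
    intro n
    apply MeasureTheory.integral_nonneg_of_ae
    filter_upwards [ae_restrict_mem measurableSet_Ioi] with l hl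
    have hl' : (0:ℝ) < l := hl
    positivity
  -- main estimate
  intro z hz
  set μ := τ.restrict (Set.Ioi 0)
  have hIntL : Integrable (fun l : ℝ => (l:ℂ) * z) μ := by
    have : Integrable (fun l : ℝ => (l:ℂ)) μ := by
      have h := hM1.1
      simp only [pow_one] at h
      exact h.ofReal
    exact this.mul_const z
  have hIntR : Integrable (fun l : ℝ => 1 - Complex.exp (-((l:ℂ) * z)) - (l:ℂ) * z) μ :=
    (intC τ hτ hz).sub hIntL
  -- value of ∫ l z
  have hIntLval : (∫ l in Set.Ioi (0:ℝ), (l:ℂ) * z ∂τ) = ((A - β : ℝ) : ℂ) * z := by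
    have : (fun l : ℝ => (l:ℂ) * z) = fun l : ℝ => l • z := by
      funext l; rw [Complex.real_smul]
    rw [this, integral_smul_const]
    have h := hM1.2
    simp only [pow_one] at h
    rw [h, Complex.real_smul]
  -- decompose f z - z
  have hsplit : f z - z = (α:ℂ) + ((A:ℂ) - 1) * z +
      ∫ l in Set.Ioi (0:ℝ), (1 - Complex.exp (-((l:ℂ) * z)) - (l:ℂ) * z) ∂τ := by
    rw [hf z hz]
    have : (∫ l in Set.Ioi (0:ℝ), (1 - Complex.exp (-((l:ℂ) * z))) ∂τ)
        = (∫ l in Set.Ioi (0:ℝ), (1 - Complex.exp (-((l:ℂ) * z)) - (l:ℂ) * z) ∂τ)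
          + ((A - β : ℝ) : ℂ) * z := by
      rw [← hIntLval, ← integral_add hIntR hIntL]
      exact integral_congr_ae (Filter.Eventually.of_forall fun l => by ring)
    rw [this]
    push_cast
    ring
  -- bound the remainder
  have hRbound : ‖(∫ l in Set.Ioi (0:ℝ), (1 - Complex.exp (-((l:ℂ) * z)) - (l:ℂ) * z) ∂τ)‖
      ≤ (-B) * (‖z‖ ^ 2 / 2) := by
    have hb : ∀ᵐ (l : ℝ) ∂μ, ‖1 - Complex.exp (-((l:ℂ) * z)) - (l:ℂ) * z‖
        ≤ l^2 * (‖z‖ ^ 2 / 2) := by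
      filter_upwards [ae_restrict_mem measurableSet_Ioi] with l hl
      have hl' : (0:ℝ) < l := hl
      have hre : 0 ≤ ((l:ℂ) * z).re := by
        simp only [Complex.mul_re, Complex.ofReal_re, Complex.ofReal_im]
        nlinarith
      calc ‖1 - Complex.exp (-((l:ℂ) * z)) - (l:ℂ) * z‖
          ≤ ‖((l:ℂ) * z)‖ ^ 2 / 2 := key_bd2 _ hre
        _ = l^2 * (‖z‖ ^ 2 / 2) := by
            rw [norm_mul, Complex.norm_real, Real.norm_eq_abs, abs_of_pos hl']; ring
    have hgint : Integrable (fun l : ℝ => l^2 * (‖z‖ ^ 2 / 2)) μ :=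
      hM2.1.mul_const _
    calc ‖(∫ l in Set.Ioi (0:ℝ), (1 - Complex.exp (-((l:ℂ) * z)) - (l:ℂ) * z) ∂τ)‖
        ≤ ∫ l in Set.Ioi (0:ℝ), l^2 * (‖z‖ ^ 2 / 2) ∂τ :=
          norm_integral_le_of_norm_le hgint hb
      _ = (-B) * (‖z‖ ^ 2 / 2) := by
          rw [integral_mul_const (μ := μ) (r := ‖z‖ ^ 2 / 2) (f := fun l : ℝ => l^2)]
          rw [hM2.2]
  -- conclude
  rw [hsplit]
  calc ‖((α:ℂ) + ((A:ℂ) - 1) * z +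
        ∫ l in Set.Ioi (0:ℝ), (1 - Complex.exp (-((l:ℂ) * z)) - (l:ℂ) * z) ∂τ)‖
      ≤ ‖((α:ℂ) + ((A:ℂ) - 1) * z)‖ +
        ‖(∫ l in Set.Ioi (0:ℝ), (1 - Complex.exp (-((l:ℂ) * z)) - (l:ℂ) * z) ∂τ)‖ := by
        apply norm_add_le
    _ ≤ (‖(α:ℂ)‖ + ‖(((A:ℂ) - 1) * z)‖) + (-B) * (‖z‖ ^ 2 / 2) := by
        gcongr
        apply norm_add_le
    _ = α + ‖(((A:ℂ) - 1) * z)‖ + (1/2) * ‖((B:ℂ) * z ^ 2)‖ := by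
        have hb2 : ‖((B:ℂ) * z ^ 2)‖ = (-B) * ‖z‖ ^ 2 := by
          rw [norm_mul, norm_pow, Complex.norm_real, Real.norm_eq_abs, abs_of_nonpos (by linarith)]
        rw [Complex.norm_real, Real.norm_eq_abs, abs_of_nonneg hα, hb2]
        ring
end
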